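/- arXiv:1606.08383 — 2 statements merged into one kernel-verified Lean document; each statement's English description precedes it below -/
import Mathlib

section
/- Reverse Grassmann necklace property of maximal bases: for every a ∈ ℤ, regarding the a-maximal bases as k-element sets of residues modulo n, if a ∈ I←_a then I←_a \ {a} ⊆ I←_{a−1}, while if a ∉ I←_a then I←_a = I←_{a−1}. -/
open scoped BigOperators

/-- The columns of `A` are `n`-periodic. -/
def ColPeriodic (k n : ℕ) (A : ℤ → Fin k → ℂ) : Prop :=
  ∀ a : ℤ, A (a + (n : ℤ)) = A a

/-- `A` has rank `k`, i.e. its columns span `ℂ^k`. -/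
def FullRank (k : ℕ) (A : ℤ → Fin k → ℂ) : Prop :=
  Submodule.span ℂ (Set.range A) = ⊤

/-- The Gale (componentwise) partial order on finite subsets of `ℤ` of equal
cardinality: `B ≼ C` iff they have the same cardinality and, for each `i`, the
`i`-th smallest element of `B` is at most the `i`-th smallest element of `C`
(equivalently, the counting condition below). -/
def galeLE (B C : Finset ℤ) : Prop :=
  B.card = C.card ∧
    ∀ t : ℤ, (B.filter fun x => t ≤ x).card ≤ (C.filter fun x => t ≤ x).card

/-- The columns of `A` indexed by `J` form a basis of `ℂ^k`. -/
def IsColBasis (k : ℕ) (A : ℤ → Fin k → ℂ) (J : Finset ℤ) : Prop :=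
  J.card = k ∧ LinearIndependent ℂ (fun j : (J : Set ℤ) => A (j : ℤ)) ∧
    Submodule.span ℂ (A '' (J : Set ℤ)) = ⊤

/-- `I` is the `≼_a`-minimal `k`-element subset of `{a, a+1, …, a+n-1}` whose
columns form a basis of `ℂ^k` (the `a`-minimal basis `I→_a`). -/
def IsMinBasis (k n : ℕ) (A : ℤ → Fin k → ℂ) (a : ℤ) (I : Finset ℤ) : Prop :=
  I ⊆ Finset.Ico a (a + (n : ℤ)) ∧ IsColBasis k A I ∧
    ∀ J : Finset ℤ, J ⊆ Finset.Ico a (a + (n : ℤ)) → IsColBasis k A J → galeLE I J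

/-- `I` is the `≼_{a+1}`-maximal `k`-element subset of `{a-n+1, …, a}` whose
columns form a basis of `ℂ^k` (the `a`-maximal basis `I←_a`).  Note that on
representatives in `{a-n+1, …, a}` the cyclic order `≺_{a+1}` agrees with the
usual order of `ℤ`. -/
def IsMaxBasis (k n : ℕ) (A : ℤ → Fin k → ℂ) (a : ℤ) (I : Finset ℤ) : Prop :=
  I ⊆ Finset.Ioc (a - (n : ℤ)) a ∧ IsColBasis k A I ∧
    ∀ J : Finset ℤ, J ⊆ Finset.Ioc (a - (n : ℤ)) a → IsColBasis k A J → galeLE J I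

/-- The standard symmetric bilinear form `⟨x|y⟩ = ∑ i, x i * y i` on `ℂ^k`. -/
noncomputable def bil (k : ℕ) (x y : Fin k → ℂ) : ℂ := ∑ i, x i * y i

/-- `π` is the bounded affine permutation of `A`:
`π a` is the least `r` with `a ≤ r ≤ a + n` and `A a ∈ span(A (a+1), …, A r)`. -/
def IsBAP (k n : ℕ) (A : ℤ → Fin k → ℂ) (π : ℤ → ℤ) : Prop :=
  ∀ a : ℤ,
    a ≤ π a ∧ π a ≤ a + (n : ℤ) ∧
    A a ∈ Submodule.span ℂ (A '' Set.Ioc a (π a)) ∧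
    ∀ r : ℤ, a ≤ r → r ≤ a + (n : ℤ) →
      A a ∈ Submodule.span ℂ (A '' Set.Ioc a r) → π a ≤ r

/-- `T` is the right twist `τ→(A)`: for each `a`, the column `T a` pairs to `1`
with `A a` and to `0` with the other columns of the `a`-minimal basis. -/
def IsRightTwist (k n : ℕ) (A T : ℤ → Fin k → ℂ) : Prop :=
  ∀ (a : ℤ) (I : Finset ℤ), IsMinBasis k n A a I →
    ∀ b ∈ I, bil k (T a) (A b) = if b = a then 1 else 0

/-- `T` is the left twist `τ←(A)`: for each `a`, the column `T a` pairs to `1`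
with `A a` and to `0` with the other columns of the `a`-maximal basis. -/
def IsLeftTwist (k n : ℕ) (A T : ℤ → Fin k → ℂ) : Prop :=
  ∀ (a : ℤ) (I : Finset ℤ), IsMaxBasis k n A a I →
    ∀ b ∈ I, bil k (T a) (A b) = if b = a then 1 else 0

/-- `Δ_I(A)`, where `I = {i 0 < i 1 < ⋯ < i (k-1)}` is given by a strictly
monotone enumeration `i : Fin k → ℤ`: the determinant of the `k×k` matrix with
columns `A (i 0), …, A (i (k-1))`. -/
noncomputable def Delta (k : ℕ) (A : ℤ → Fin k → ℂ) (i : Fin k → ℤ) : ℂ :=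
  Matrix.det (Matrix.of fun r s : Fin k => A (i s) r)

/-!
The `a`-maximal basis is the greedy set of those `x ∈ (a - n, a]` for which `A x` is not in the
span of `A (x + 1), …, A a`. A basis element outside the greedy set could be exchanged for a later
column, contradicting Gale-maximality; and the greedy set is linearly independent, so it has no
more than `k` elements. Passing from `a` to `a - 1` only shrinks these spans, so every `x ≠ a` of
`I←_a` stays in `I←_{a-1}`; when `a ∉ I←_a` both bases have `k` elements and the inclusion is an
equality.
-/

open Submodule

theorem linearIndepOn_of_notMem_span_Ioi {K M ι : Type*} [DivisionRing K] [AddCommGroup M]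
    [Module K M] [LinearOrder ι] {f : ι → M} (s : Finset ι)
    (h : ∀ x ∈ s, f x ∉ span K (f '' (↑s ∩ Set.Ioi x))) : LinearIndepOn K f (s : Set ι) := by
  classical
  induction s using Finset.induction_on_min with
  | empty => simp
  | insert a s ha ih =>
    have has : a ∉ s := fun h => lt_irrefl a (ha a h)
    have hs_Ioi : (↑(insert a s) : Set ι) ∩ Set.Ioi a = ↑s := by
      ext x
      simp only [Finset.coe_insert, Set.mem_inter_iff, Set.mem_insert_iff, Finset.mem_coe,
        Set.mem_Ioi]
      exact ⟨fun ⟨hx, hax⟩ => hx.resolve_left (ne_of_gt hax), fun hx => ⟨Or.inr hx, ha x hx⟩⟩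
    rw [Finset.coe_insert, linearIndepOn_insert (by exact_mod_cast has)]
    refine ⟨ih fun x hx hmem => h x (Finset.mem_insert_of_mem hx) ?_, ?_⟩
    · exact span_mono (Set.image_mono (Set.inter_subset_inter_left _ (by simp))) hmem
    · have := h a (Finset.mem_insert_self a s)
      rwa [hs_Ioi] at this

theorem not_galeLE_insert_erase_of_lt {I : Finset ℤ} {x y : ℤ} (hy : y ∉ I)
    (hxy : x < y) : ¬ galeLE (insert y (I.erase x)) I := by
  rintro ⟨-, h⟩
  have hcount := h (x + 1)
  have herase : ((I.erase x).filter fun t => x + 1 ≤ t) = I.filter fun t => x + 1 ≤ t := by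
    ext z
    simp only [Finset.mem_filter, Finset.mem_erase]
    exact ⟨fun ⟨⟨_, hz⟩, hxz⟩ => ⟨hz, hxz⟩, fun ⟨hz, hxz⟩ => ⟨⟨by omega, hz⟩, hxz⟩⟩
  rw [Finset.filter_insert, if_pos (by omega), herase,
    Finset.card_insert_of_notMem (by simp [hy])] at hcount
  omega

section Columns

variable {k n : ℕ} {A : ℤ → Fin k → ℂ}

theorem IsColBasis.of_linearIndepOn {J : Finset ℤ} (hcard : J.card = k)
    (hli : LinearIndepOn ℂ A (J : Set ℤ)) : IsColBasis k A J := by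
  refine ⟨hcard, hli, ?_⟩
  rw [Set.image_eq_range]
  exact hli.span_eq_top_of_card_eq_finrank' (by simp [hcard])

theorem IsColBasis.exchange {I : Finset ℤ} (hI : IsColBasis k A I) {x y : ℤ} (hx : x ∈ I)
    (hy : y ∉ I) (hspan : A y ∉ span ℂ (A '' ↑(I.erase x))) :
    IsColBasis k A (insert y (I.erase x)) := by
  have hy' : y ∉ I.erase x := fun h => hy (Finset.mem_of_mem_erase h)
  refine .of_linearIndepOn ?_ ?_
  · have hpos := Finset.card_pos.mpr ⟨x, hx⟩
    rw [Finset.card_insert_of_notMem hy', Finset.card_erase_of_mem hx, ← hI.1]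
    omega
  · rw [Finset.coe_insert, linearIndepOn_insert (by exact_mod_cast hy')]
    exact ⟨LinearIndepOn.mono hI.2.1 (by simp), hspan⟩

theorem IsMaxBasis.notMem_span_Ioc {a : ℤ} {I : Finset ℤ} (hI : IsMaxBasis k n A a I) {x : ℤ}
    (hx : x ∈ I) : A x ∉ span ℂ (A '' Set.Ioc x a) := by
  obtain ⟨hIsub, hIb, hImax⟩ := hI
  intro hmem
  have hx_indep : A x ∉ span ℂ (A '' ↑(I.erase x)) := by
    have hli : LinearIndepOn ℂ A ↑(insert x (I.erase x)) := by
      rw [Finset.insert_erase hx]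
      exact hIb.2.1
    rw [Finset.coe_insert, linearIndepOn_insert (by simp)] at hli
    exact hli.2
  obtain ⟨y, hy, hyspan⟩ : ∃ y ∈ Set.Ioc x a, A y ∉ span ℂ (A '' ↑(I.erase x)) := by
    by_contra! hcon
    exact hx_indep (span_le.mpr (Set.image_subset_iff.mpr hcon) hmem)
  have hyI : y ∉ I := fun hyI =>
    hyspan (subset_span ⟨y, by simp [hyI, (ne_of_lt hy.1).symm], rfl⟩)
  refine not_galeLE_insert_erase_of_lt hyI hy.1 (hImax _ ?_ (hIb.exchange hx hyI hyspan))
  have hxw := Finset.mem_Ioc.mp (hIsub hx)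
  exact Finset.insert_subset (Finset.mem_Ioc.mpr ⟨by linarith [hy.1], hy.2⟩)
    ((Finset.erase_subset x I).trans hIsub)

open scoped Classical in
noncomputable def greedyMaxBasis (k n : ℕ) (A : ℤ → Fin k → ℂ) (a : ℤ) : Finset ℤ :=
  (Finset.Ioc (a - n) a).filter fun x => A x ∉ span ℂ (A '' Set.Ioc x a)

theorem mem_greedyMaxBasis {a x : ℤ} :
    x ∈ greedyMaxBasis k n A a ↔ x ∈ Finset.Ioc (a - n) a ∧ A x ∉ span ℂ (A '' Set.Ioc x a) := by
  classical
  simp only [greedyMaxBasis, Finset.mem_filter]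

theorem linearIndepOn_greedyMaxBasis (a : ℤ) :
    LinearIndepOn ℂ A (greedyMaxBasis k n A a : Set ℤ) := by
  refine linearIndepOn_of_notMem_span_Ioi _ fun x hx hmem => (mem_greedyMaxBasis.mp hx).2 ?_
  refine span_mono (Set.image_mono ?_) hmem
  rintro y ⟨hy, hxy⟩
  exact ⟨hxy, (Finset.mem_Ioc.mp (mem_greedyMaxBasis.mp hy).1).2⟩

theorem IsMaxBasis.eq_greedyMaxBasis {a : ℤ} {I : Finset ℤ} (hI : IsMaxBasis k n A a I) :
    I = greedyMaxBasis k n A a := by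
  have hIG : I ⊆ greedyMaxBasis k n A a := fun x hx =>
    mem_greedyMaxBasis.mpr ⟨hI.1 hx, hI.notMem_span_Ioc hx⟩
  refine Finset.eq_of_subset_of_card_le hIG ?_
  have hcard := (linearIndepOn_greedyMaxBasis (n := n) (A := A) a).fintype_card_le_finrank
  simp only [Finset.coe_sort_coe, Fintype.card_coe, Module.finrank_fin_fun] at hcard
  rwa [hI.2.1.1]

theorem IsMaxBasis.erase_subset {a : ℤ} {I I' : Finset ℤ}
    (hI : IsMaxBasis k n A a I) (hI' : IsMaxBasis k n A (a - 1) I') : I.erase a ⊆ I' := by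
  intro x hx
  obtain ⟨hxa, hxI⟩ := Finset.mem_erase.mp hx
  rw [hI'.eq_greedyMaxBasis, mem_greedyMaxBasis, Finset.mem_Ioc]
  have hxw := Finset.mem_Ioc.mp (hI.1 hxI)
  refine ⟨⟨by omega, by omega⟩, fun hmem => hI.notMem_span_Ioc hxI ?_⟩
  exact span_mono (Set.image_mono (Set.Ioc_subset_Ioc_right (by omega))) hmem

end Columns

theorem reverse_grassmann_necklace_property_general
    (k n : ℕ)
    (A : ℤ → Fin k → ℂ)
    (a : ℤ) (Ia Ia' : Finset ℤ)
    (hIa : IsMaxBasis k n A a Ia) (hIa' : IsMaxBasis k n A (a - 1) Ia') :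
    (a ∈ Ia →
      (Ia.erase a).image (fun x : ℤ => (x : ZMod n)) ⊆
        Ia'.image (fun x : ℤ => (x : ZMod n))) ∧
    (a ∉ Ia →
      Ia.image (fun x : ℤ => (x : ZMod n)) =
        Ia'.image (fun x : ℤ => (x : ZMod n))) := by
  have hsub := hIa.erase_subset hIa'
  refine ⟨fun _ => Finset.image_subset_image hsub, fun ha => ?_⟩
  rw [Finset.erase_eq_of_notMem ha] at hsub
  rw [Finset.eq_of_subset_of_card_le hsub (by rw [hIa.2.1.1, hIa'.2.1.1])]

/-- reverse Grassmann necklace property of maximal bases: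
for every `a ∈ ℤ`, regarding the `a`-maximal bases as `k`-element sets of
residues modulo `n`, if `a ∈ I←_a` then `I←_a \ {a} ⊆ I←_{a-1}`, while if
`a ∉ I←_a` then `I←_a = I←_{a-1}`. -/
theorem reverse_grassmann_necklace_property
    (k n : ℕ) (hk : 1 ≤ k) (hkn : k ≤ n)
    (A : ℤ → Fin k → ℂ) (hper : ColPeriodic k n A) (hrank : FullRank k A)
    (a : ℤ) (Ia Ia' : Finset ℤ)
    (hIa : IsMaxBasis k n A a Ia) (hIa' : IsMaxBasis k n A (a - 1) Ia') :
    (a ∈ Ia →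
      (Ia.erase a).image (fun x : ℤ => (x : ZMod n)) ⊆
        Ia'.image (fun x : ℤ => (x : ZMod n))) ∧
    (a ∉ Ia →
      Ia.image (fun x : ℤ => (x : ZMod n)) =
        Ia'.image (fun x : ℤ => (x : ZMod n))) :=
  reverse_grassmann_necklace_property_general k n A a Ia Ia' hIa hIa'
end

section
/- Description of the Grassmann necklace via π-implication: for every a ∈ ℤ, the a-minimal basis I→_a, viewed as a k-element subset of {a, a+1, …, a+n−1}, is the disjoint union of the set { π(b) : b ∈ ℤ, a ⇒_π b } and the ≼_a-minimal subset S of {a, …, π(a)−1} such that the columns {A_s : s ∈ S} form a basis of span(A_a, A_{a+1}, …, A_{π(a)−1}). -/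
open scoped BigOperators

/-! For any window `[a, t)`, the `≼_a`-minimal independent set spanning the columns
`A a, …, A (t - 1)` is the greedy one, `{j ∈ [a, t) : A j ∉ span (A a, …, A (j - 1))}`:
every initial segment of it is as large as an independent set can be. So `I→_a` is the
greedy basis of `[a, a + n)` and `S` that of `[a, π a)`. Below `π a` the two agree, `π a` is
never greedy since `A (π a) ∈ span (A a, …, A (π a - 1))`, and an index `j > π a` of the window
is greedy exactly when `j = π b` for some `b < a`, by the exchange lemma. -/

open Submodule

theorem mem_span_insert_and_notMem_span_comm {K M : Type*} [DivisionRing K]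
    [AddCommGroup M] [Module K M] {x y : M} {s : Set M} :
    (x ∈ span K (insert y s) ∧ x ∉ span K s) ↔ (y ∈ span K (insert x s) ∧ y ∉ span K s) := by
  have key : ∀ {x y : M}, x ∈ span K (insert y s) → x ∉ span K s →
      y ∈ span K (insert x s) ∧ y ∉ span K s := fun hx hxs =>
    ⟨mem_span_insert_exchange hx hxs, fun hy => hxs (by rwa [span_insert_eq_span hy] at hx)⟩
  exact ⟨fun h => key h.1 h.2, fun h => key h.1 h.2⟩

theorem card_filter_le_eq_add (B : Finset ℤ) (x : ℤ) :
    (B.filter (x ≤ ·)).card = (B.filter (x + 1 ≤ ·)).card + (B.filter (· = x)).card := by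
  rw [← Finset.card_filter_add_card_filter_not (s := B.filter (x ≤ ·)) (p := (x + 1 ≤ ·)),
    Finset.filter_filter, Finset.filter_filter]
  congr 3 <;> ext y <;> omega

theorem galeLE_antisymm {B C : Finset ℤ} (hBC : galeLE B C) (hCB : galeLE C B) : B = C := by
  have hcount (t : ℤ) : (B.filter (t ≤ ·)).card = (C.filter (t ≤ ·)).card :=
    le_antisymm (hBC.2 t) (hCB.2 t)
  ext x
  have hB := card_filter_le_eq_add B x
  have hC := card_filter_le_eq_add C x
  have hx : (B.filter (· = x)).card = (C.filter (· = x)).card := by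
    have := hcount x; have := hcount (x + 1); omega
  rw [Finset.filter_eq', Finset.filter_eq'] at hx
  by_cases hxB : x ∈ B <;> by_cases hxC : x ∈ C <;> simp_all

section Greedy

variable {K M : Type*} [DivisionRing K] [AddCommGroup M] [Module K M]

theorem LinearIndepOn.card_eq_finrank_span {A : ℤ → M} {J : Finset ℤ}
    (hJ : LinearIndepOn K A (J : Set ℤ)) :
    J.card = Module.finrank K (span K (A '' (J : Set ℤ))) := by
  rw [Set.image_eq_range, finrank_span_eq_card hJ]
  simp

variable (K) in
open Classical in
noncomputable def greedyBasis (A : ℤ → M) (a t : ℤ) : Finset ℤ :=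
  (Finset.Ico a t).filter fun j => A j ∉ span K (A '' Set.Ico a j)

variable {A : ℤ → M} {a t : ℤ}

theorem mem_greedyBasis {j : ℤ} :
    j ∈ greedyBasis K A a t ↔ (a ≤ j ∧ j < t) ∧ A j ∉ span K (A '' Set.Ico a j) := by
  simp [greedyBasis]

theorem greedyBasis_subset : greedyBasis K A a t ⊆ Finset.Ico a t :=
  fun _ hj => Finset.mem_Ico.2 (mem_greedyBasis.1 hj).1

open Classical in
theorem greedyBasis_add_one (ht : a ≤ t) :
    greedyBasis K A a (t + 1) =
      if A t ∈ span K (A '' Set.Ico a t) then greedyBasis K A a t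
      else insert t (greedyBasis K A a t) := by
  rw [greedyBasis, ← Finset.insert_Ico_right_eq_Ico_add_one ht, Finset.filter_insert, ite_not]
  rfl

theorem linearIndepOn_greedyBasis_and_span_eq (ht : a ≤ t) :
    LinearIndepOn K A (greedyBasis K A a t : Set ℤ) ∧
      span K (A '' (greedyBasis K A a t : Set ℤ)) = span K (A '' Set.Ico a t) := by
  induction t, ht using Int.leInduction with
  | base => simp [greedyBasis, linearIndepOn_empty]
  | succ t ht ih =>
    obtain ⟨hind, hspan⟩ := ih
    rw [greedyBasis_add_one ht, ← Set.insert_Ico_right_eq_Ico_add_one ht, Set.image_insert_eq]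
    split_ifs with hnew
    · rw [span_insert_eq_span hnew]
      exact ⟨hind, hspan⟩
    · have ht_notMem : t ∉ (greedyBasis K A a t : Set ℤ) := fun h =>
        (mem_greedyBasis.1 h).1.2.false
      rw [Finset.coe_insert, linearIndepOn_insert ht_notMem, Set.image_insert_eq, span_insert,
        span_insert, hspan]
      exact ⟨⟨hind, hspan ▸ hnew⟩, rfl⟩

theorem card_le_card_greedyBasis (ht : a ≤ t) {J : Finset ℤ} (hJ : J ⊆ Finset.Ico a t)
    (hind : LinearIndepOn K A (J : Set ℤ)) : J.card ≤ (greedyBasis K A a t).card := by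
  obtain ⟨hGind, hGspan⟩ := linearIndepOn_greedyBasis_and_span_eq (K := K) (A := A) ht
  rw [hind.card_eq_finrank_span, hGind.card_eq_finrank_span, hGspan]
  have := FiniteDimensional.span_of_finite K ((Set.finite_Ico a t).image A)
  exact finrank_mono (span_mono (Set.image_mono (Finset.coe_Ico a t ▸ Finset.coe_subset.2 hJ)))

/-- Truncating the greedy basis below `s` gives the greedy basis of a shorter window,
which is as large as any independent set in that window. -/
theorem greedyBasis_galeLE (ht : a ≤ t) {J : Finset ℤ} (hJ : J ⊆ Finset.Ico a t)
    (hind : LinearIndepOn K A (J : Set ℤ)) (hcard : J.card = (greedyBasis K A a t).card) :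
    galeLE (greedyBasis K A a t) J := by
  refine ⟨hcard.symm, fun s => ?_⟩
  obtain ⟨u, hau, hu⟩ : ∃ u, a ≤ u ∧ u = max a (min s t) := ⟨_, le_max_left _ _, rfl⟩
  have hGbelow : (greedyBasis K A a t).filter (fun x => ¬ s ≤ x) = greedyBasis K A a u := by
    ext x
    simp only [Finset.mem_filter, mem_greedyBasis]
    constructor
    · rintro ⟨⟨⟨hax, hxt⟩, hx⟩, hxs⟩
      exact ⟨⟨hax, by omega⟩, hx⟩
    · rintro ⟨⟨hax, hxu⟩, hx⟩
      exact ⟨⟨⟨hax, by omega⟩, hx⟩, by omega⟩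
  have hJbelow : J.filter (fun x => ¬ s ≤ x) ⊆ Finset.Ico a u := by
    intro x hx
    rw [Finset.mem_filter] at hx
    have := Finset.mem_Ico.1 (hJ hx.1)
    exact Finset.mem_Ico.2 ⟨this.1, by omega⟩
  have hle := card_le_card_greedyBasis hau hJbelow
    (hind.mono (Finset.coe_subset.2 (Finset.filter_subset _ _)))
  have hGcount := Finset.card_filter_add_card_filter_not (s := greedyBasis K A a t) (p := (s ≤ ·))
  have hJcount := Finset.card_filter_add_card_filter_not (s := J) (p := (s ≤ ·))
  rw [hGbelow] at hGcount
  omega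

theorem eq_greedyBasis_of_galeLE (ht : a ≤ t) {J : Finset ℤ} (hJ : J ⊆ Finset.Ico a t)
    (hind : LinearIndepOn K A (J : Set ℤ))
    (hspan : span K (A '' (J : Set ℤ)) = span K (A '' Set.Ico a t))
    (hmin : galeLE J (greedyBasis K A a t)) : J = greedyBasis K A a t := by
  obtain ⟨hGind, hGspan⟩ := linearIndepOn_greedyBasis_and_span_eq (K := K) (A := A) ht
  have hcard : J.card = (greedyBasis K A a t).card := by
    rw [hind.card_eq_finrank_span, hGind.card_eq_finrank_span, hspan, hGspan]
  exact galeLE_antisymm hmin (greedyBasis_galeLE ht hJ hind hcard)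

end Greedy

theorem IsMinBasis.eq_greedyBasis {k n : ℕ} {A : ℤ → Fin k → ℂ} {a : ℤ} {I : Finset ℤ}
    (hI : IsMinBasis k n A a I) : I = greedyBasis ℂ A a (a + n) := by
  obtain ⟨hIsub, ⟨hIcard, hIind, hIspan⟩, hImin⟩ := hI
  have han : a ≤ a + n := by omega
  have hwindow : span ℂ (A '' Set.Ico a (a + n)) = ⊤ := top_unique <| hIspan ▸
    span_mono (Set.image_mono (Finset.coe_Ico a (a + n) ▸ Finset.coe_subset.2 hIsub))
  obtain ⟨hGind, hGspan⟩ := linearIndepOn_greedyBasis_and_span_eq (K := ℂ) (A := A) han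
  have hGbasis : IsColBasis k A (greedyBasis ℂ A a (a + n)) := by
    refine ⟨?_, hGind, hGspan.trans hwindow⟩
    rw [hGind.card_eq_finrank_span, hGspan, hwindow, ← hIspan,
      ← LinearIndepOn.card_eq_finrank_span hIind, hIcard]
  exact eq_greedyBasis_of_galeLE han hIsub hIind (hIspan.trans hwindow.symm)
    (hImin _ greedyBasis_subset hGbasis)

namespace IsBAP

variable {k n : ℕ} {A : ℤ → Fin k → ℂ} {π : ℤ → ℤ}

/-- By the exchange lemma, the minimality defining `π b = j` can be read off from the
column `A j` instead of `A b`. -/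
theorem pi_eq_iff (hπ : IsBAP k n A π) {b j : ℤ} (hbj : b < j) (hjb : j ≤ b + n) :
    π b = j ↔ A j ∈ span ℂ (A '' Set.Ico b j) ∧ A j ∉ span ℂ (A '' Set.Ioo b j) := by
  obtain ⟨-, hπb, hmem, hleast⟩ := hπ b
  rw [← Set.Ioo_insert_left hbj, Set.image_insert_eq, ← mem_span_insert_and_notMem_span_comm,
    ← Set.image_insert_eq, Set.Ioo_insert_right hbj]
  constructor
  · rintro rfl
    refine ⟨hmem, fun h => ?_⟩
    have := hleast (π b - 1) (by omega) (by omega) (by rwa [Set.Ioc_sub_one_right_eq_Ioo])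
    omega
  · rintro ⟨hin, hout⟩
    refine le_antisymm (hleast j hbj.le hjb hin) (not_lt.1 fun hlt => hout ?_)
    exact span_mono (Set.image_mono (Set.Ioc_subset_Ioo_right hlt)) hmem

theorem mem_span_Ico_pi (hπ : IsBAP k n A π) (a : ℤ) :
    A (π a) ∈ span ℂ (A '' Set.Ico a (π a)) := by
  obtain ⟨ha, han, hmem, -⟩ := hπ a
  rcases ha.eq_or_lt with heq | hlt
  · rw [← heq, Set.Ioc_self, Set.image_empty, span_empty, mem_bot] at hmem
    rw [← heq, hmem]
    exact zero_mem _
  · exact ((hπ.pi_eq_iff hlt han).1 rfl).1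

theorem notMem_span_Ico_pi (hπ : IsBAP k n A π) {a b : ℤ} (hba : b < a) (hab : a ≤ π b) :
    A (π b) ∉ span ℂ (A '' Set.Ico a (π b)) := fun h =>
  ((hπ.pi_eq_iff (hba.trans_le hab) (hπ b).2.1).1 rfl).2
    (span_mono (Set.image_mono (Set.Ico_subset_Ioo_left hba)) h)

/-- Take `b` greatest with `A j ∈ span (A b, …, A (j - 1))`; periodicity gives `b ≥ j - n`. -/
theorem exists_pi_eq (hπ : IsBAP k n A π) (hper : ColPeriodic k n A) {a j : ℤ}
    (haj : a < j) (hjn : j < a + n) (hj : A j ∉ span ℂ (A '' Set.Ico a j)) :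
    ∃ b, j - n ≤ b ∧ b < a ∧ π b = j := by
  let P : ℤ → Prop := fun b => A j ∈ span ℂ (A '' Set.Ico b j)
  have hP_anti {b b' : ℤ} (h : b ≤ b') (hb' : P b') : P b :=
    span_mono (Set.image_mono (Set.Ico_subset_Ico_left h)) hb'
  have hP_lt {b : ℤ} (hb : P b) : b < a := not_le.1 fun h => hj (hP_anti h hb)
  have hP_start : P (j - n) :=
    subset_span ⟨j - n, ⟨le_rfl, by omega⟩, by rw [← hper (j - n), sub_add_cancel]⟩
  obtain ⟨b, hb, hbmax⟩ :=
    Int.exists_greatest_of_bdd (P := P) ⟨a, fun _ hz => (hP_lt hz).le⟩ ⟨_, hP_start⟩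
  have hjb := hbmax _ hP_start
  have hba := hP_lt hb
  refine ⟨b, hjb, hba, (hπ.pi_eq_iff (by omega) (by omega)).2 ⟨hb, fun h => ?_⟩⟩
  rw [← Set.Ico_add_one_left_eq_Ioo] at h
  exact (hbmax _ h).not_gt (lt_add_one b)

theorem greedyBasis_eq_union (hπ : IsBAP k n A π) (hper : ColPeriodic k n A) (a : ℤ) :
    greedyBasis ℂ A a (a + n) = greedyBasis ℂ A a (π a) ∪
      ((Finset.Ioo (a - (n : ℤ)) a).filter (fun b => b < a ∧ a ≤ π a ∧ π a < π b)).image π := by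
  obtain ⟨ha, han, -, -⟩ := hπ a
  ext j
  simp only [Finset.mem_union, Finset.mem_image, Finset.mem_filter, Finset.mem_Ioo,
    mem_greedyBasis]
  constructor
  · rintro ⟨⟨haj, hjn⟩, hj⟩
    rcases lt_trichotomy j (π a) with hlt | rfl | hgt
    · exact Or.inl ⟨⟨haj, hlt⟩, hj⟩
    · exact absurd (hπ.mem_span_Ico_pi a) hj
    · obtain ⟨b, hjb, hba, rfl⟩ := hπ.exists_pi_eq hper (by omega) hjn hj
      exact Or.inr ⟨b, ⟨⟨by omega, hba⟩, hba, ha, hgt⟩, rfl⟩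
  · rintro (⟨⟨haj, hjπ⟩, hj⟩ | ⟨b, ⟨⟨hb, hba⟩, -, -, hπab⟩, rfl⟩)
    · exact ⟨⟨haj, by omega⟩, hj⟩
    · have := (hπ b).2.1
      exact ⟨⟨by omega, by omega⟩, hπ.notMem_span_Ico_pi hba (by omega)⟩

end IsBAP

theorem necklace_via_implication_general
    (k n : ℕ)
    (A : ℤ → Fin k → ℂ) (hper : ColPeriodic k n A)
    (π : ℤ → ℤ) (hπ : IsBAP k n A π)
    (a : ℤ) (Ia : Finset ℤ) (hIa : IsMinBasis k n A a Ia)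
    (S : Finset ℤ)
    (hSsub : S ⊆ Finset.Ico a (π a))
    (hSind : LinearIndependent ℂ (fun s : (S : Set ℤ) => A (s : ℤ)))
    (hSspan : Submodule.span ℂ (A '' (S : Set ℤ)) =
      Submodule.span ℂ (A '' Set.Ico a (π a)))
    (hSmin : ∀ S' : Finset ℤ, S' ⊆ Finset.Ico a (π a) →
      LinearIndependent ℂ (fun s : (S' : Set ℤ) => A (s : ℤ)) →
      Submodule.span ℂ (A '' (S' : Set ℤ)) =
        Submodule.span ℂ (A '' Set.Ico a (π a)) →
      galeLE S S') :
    Ia = S ∪ (((Finset.Ioo (a - (n : ℤ)) a).filter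
        (fun b => b < a ∧ a ≤ π a ∧ π a < π b)).image π) ∧
    Disjoint S (((Finset.Ioo (a - (n : ℤ)) a).filter
        (fun b => b < a ∧ a ≤ π a ∧ π a < π b)).image π) := by
  have hI := hIa.eq_greedyBasis
  have hπa : a ≤ π a := (hπ a).1
  obtain ⟨hSGind, hSGspan⟩ := linearIndepOn_greedyBasis_and_span_eq (K := ℂ) (A := A) hπa
  have hS : S = greedyBasis ℂ A a (π a) := eq_greedyBasis_of_galeLE hπa hSsub hSind hSspan
    (hSmin _ greedyBasis_subset hSGind hSGspan)
  refine ⟨hI ▸ hS ▸ hπ.greedyBasis_eq_union hper a, Finset.disjoint_left.2 ?_⟩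
  intro j hjS hjπ
  obtain ⟨b, hb, rfl⟩ := Finset.mem_image.1 hjπ
  have := (mem_greedyBasis.1 (hS ▸ hjS)).1.2
  have := (Finset.mem_filter.1 hb).2
  omega

/-- description of the Grassmann necklace via π-implication:
`I→_a` is the disjoint union of `{π b : a ⇒_π b}` (note every such `π b` lies
in `{a, …, a+n-1}`, indeed with `b ∈ (a-n, a)`) and the `≼_a`-minimal subset
`S` of `{a, …, π a - 1}` whose columns form a basis of
`span(A a, …, A (π a - 1))`. -/
theorem necklace_via_implication
    (k n : ℕ) (hk : 1 ≤ k) (hkn : k ≤ n)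
    (A : ℤ → Fin k → ℂ) (hper : ColPeriodic k n A) (hrank : FullRank k A)
    (π : ℤ → ℤ) (hπ : IsBAP k n A π)
    (a : ℤ) (Ia : Finset ℤ) (hIa : IsMinBasis k n A a Ia)
    (S : Finset ℤ)
    (hSsub : S ⊆ Finset.Ico a (π a))
    (hSind : LinearIndependent ℂ (fun s : (S : Set ℤ) => A (s : ℤ)))
    (hSspan : Submodule.span ℂ (A '' (S : Set ℤ)) =
      Submodule.span ℂ (A '' Set.Ico a (π a)))
    (hSmin : ∀ S' : Finset ℤ, S' ⊆ Finset.Ico a (π a) →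
      LinearIndependent ℂ (fun s : (S' : Set ℤ) => A (s : ℤ)) →
      Submodule.span ℂ (A '' (S' : Set ℤ)) =
        Submodule.span ℂ (A '' Set.Ico a (π a)) →
      galeLE S S') :
    Ia = S ∪ (((Finset.Ioo (a - (n : ℤ)) a).filter
        (fun b => b < a ∧ a ≤ π a ∧ π a < π b)).image π) ∧
    Disjoint S (((Finset.Ioo (a - (n : ℤ)) a).filter
        (fun b => b < a ∧ a ≤ π a ∧ π a < π b)).image π) :=
  necklace_via_implication_general k n A hper π hπ a Ia hIa S hSsub hSind hSspan hSmin
end
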